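/- arXiv:2004.07403 — 6 statements merged into one kernel-verified Lean document; each statement's English description precedes it below -/
import Mathlib

section
/- If y₁ < y₂ < ⋯ < yₙ are distinct real numbers, then the iterated simplex integral ∫₀¹ ∫₀^{1−x₁} ⋯ ∫₀^{1−x₁−⋯−x_{n−2}} exp(⟨y, x⟩) dx_{n−1} ⋯ dx₁ (with xₙ := 1 − x₁ − ⋯ − x_{n−1}) equals ∑_{i=1}^{n} e^{yᵢ} / ∏_{j ≠ i} (yᵢ − yⱼ). -/
open MeasureTheory Real Finset

noncomputable section

namespace Stmt4

def S (n : ℕ) : Set (Fin n → ℝ) := {x | (∀ i, 0 ≤ x i) ∧ ∑ i, x i ≤ 1}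

def F (n : ℕ) (y : Fin (n+1) → ℝ) (x : Fin n → ℝ) : ℝ :=
  Real.exp ((∑ i : Fin n, y i.castSucc * x i) + y (Fin.last n) * (1 - ∑ i, x i))

def LHS (n : ℕ) (y : Fin (n+1) → ℝ) : ℝ := ∫ x in S n, F n y x

def RHS (n : ℕ) (y : Fin (n+1) → ℝ) : ℝ :=
  ∑ i, Real.exp (y i) / ∏ j ∈ Finset.univ.erase i, (y i - y j)

lemma isClosed_S (n : ℕ) : IsClosed (S n) := by
  have h1 : IsClosed {x : Fin n → ℝ | ∀ i, 0 ≤ x i} := by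
    have : {x : Fin n → ℝ | ∀ i, 0 ≤ x i} = ⋂ i, {x | 0 ≤ x i} := by ext x; simp [Set.mem_iInter]
    rw [this]
    exact isClosed_iInter fun i => isClosed_le continuous_const (continuous_apply i)
  have h2 : IsClosed {x : Fin n → ℝ | ∑ i, x i ≤ 1} :=
    isClosed_le (by fun_prop) continuous_const
  exact h1.inter h2

lemma S_subset_Icc (n : ℕ) : S n ⊆ Set.Icc (0 : Fin n → ℝ) 1 := by
  rintro x ⟨h0, h1⟩
  refine ⟨fun i => h0 i, fun i => ?_⟩
  calc x i ≤ ∑ j, x j := Finset.single_le_sum (fun j _ => h0 j) (Finset.mem_univ i)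
    _ ≤ 1 := h1

lemma isCompact_S (n : ℕ) : IsCompact (S n) :=
  (isCompact_Icc).of_isClosed_subset (isClosed_S n) (S_subset_Icc n)

lemma measurableSet_S (n : ℕ) : MeasurableSet (S n) := (isClosed_S n).measurableSet

lemma continuous_F (n : ℕ) (y : Fin (n+1) → ℝ) : Continuous (F n y) := by
  unfold F; fun_prop

lemma integrableOn_F (n : ℕ) (y : Fin (n+1) → ℝ) : IntegrableOn (F n y) (S n) :=
  (continuous_F n y).continuousOn.integrableOn_compact (isCompact_S n)

lemma base (y : Fin 1 → ℝ) : LHS 0 y = RHS 0 y := by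
  unfold LHS RHS F S
  have hs : {x : Fin 0 → ℝ | (∀ i, 0 ≤ x i) ∧ ∑ i, x i ≤ 1} = Set.univ := by ext x; simp
  rw [hs, setIntegral_univ, show (volume : Measure (Fin 0 → ℝ)) = Measure.dirac 0 from
    (MeasureTheory.Measure.pi_of_empty _ 0)]
  simp [Finset.univ_unique, Fin.last]

/-- the `if`-product form of the denominator -/
def Pd (m : ℕ) (z : Fin m → ℝ) (i : Fin m) : ℝ := ∏ j, if j = i then 1 else z i - z j

lemma Pd_eq (m : ℕ) (z : Fin m → ℝ) (i : Fin m) :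
    ∏ j ∈ Finset.univ.erase i, (z i - z j) = Pd m z i := by
  unfold Pd
  rw [← Finset.prod_erase Finset.univ (a := i) (f := fun j => if j = i then (1:ℝ) else z i - z j)
    (if_pos rfl)]
  exact Finset.prod_congr rfl fun j hj => by
    rw [if_neg (Finset.ne_of_mem_erase hj)]

lemma Pd_ne_zero {m : ℕ} {z : Fin m → ℝ} (hz : Function.Injective z) (i : Fin m) :
    Pd m z i ≠ 0 := by
  refine Finset.prod_ne_zero_iff.2 fun j _ => ?_
  split_ifs with h
  · exact one_ne_zero
  · exact sub_ne_zero.2 fun e => h (hz e.symm)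

lemma Pd_castSucc (m : ℕ) (z : Fin (m+1) → ℝ) (i : Fin m) :
    Pd (m+1) z i.castSucc = Pd m (z ∘ Fin.castSucc) i * (z i.castSucc - z (Fin.last m)) := by
  unfold Pd
  rw [Fin.prod_univ_castSucc]
  congr 1
  · exact Finset.prod_congr rfl fun j _ => by
      simp [Fin.castSucc_inj]
  · rw [if_neg (Fin.castSucc_lt_last i).ne']

lemma Pd_last (m : ℕ) (z : Fin (m+1) → ℝ) :
    Pd (m+1) z (Fin.last m) = ∏ j : Fin m, (z (Fin.last m) - z j.castSucc) := by
  unfold Pd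
  rw [Fin.prod_univ_castSucc, if_pos rfl, mul_one]
  exact Finset.prod_congr rfl fun j _ => by
    rw [if_neg (Fin.castSucc_lt_last j).ne]

lemma RHS_rec (n : ℕ) (y : Fin (n+2) → ℝ) (hy : Function.Injective y) :
    RHS (n+1) y =
      (RHS n (y ∘ Fin.castSucc) - RHS n (y ∘ (Fin.castSucc (Fin.last n)).succAbove)) /
        (y (Fin.castSucc (Fin.last n)) - y (Fin.last (n+1))) := by
  have hb1 : ∀ i : Fin n, (y ∘ (Fin.castSucc (Fin.last n)).succAbove) i.castSucc
      = y i.castSucc.castSucc := fun i => by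
    show y _ = _
    rw [Fin.succAbove_of_castSucc_lt _ _ (Fin.castSucc_lt_castSucc_iff.2 (Fin.castSucc_lt_last i))]
  have hb2 : (y ∘ (Fin.castSucc (Fin.last n)).succAbove) (Fin.last n) = y (Fin.last (n+1)) := by
    show y _ = _
    rw [Fin.succAbove_of_le_castSucc _ _ (le_refl _), Fin.succ_last]
  have hpq : Fin.castSucc (Fin.last n) ≠ Fin.last (n+1) := (Fin.castSucc_lt_last _).ne
  have hk : y (Fin.castSucc (Fin.last n)) - y (Fin.last (n+1)) ≠ 0 :=
    sub_ne_zero.2 fun e => hpq (hy e)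
  have ha : Function.Injective (y ∘ Fin.castSucc) := hy.comp (Fin.castSucc_injective _)
  have hbinj : Function.Injective (y ∘ (Fin.castSucc (Fin.last n)).succAbove) :=
    hy.comp (Fin.succAbove_right_injective)
  rw [eq_div_iff hk]
  unfold RHS
  simp only [Pd_eq]
  rw [Finset.sum_mul, Fin.sum_univ_castSucc (n := n+1), Fin.sum_univ_castSucc (n := n),
    Fin.sum_univ_castSucc (n := n), Fin.sum_univ_castSucc (n := n)]
  have hterm : ∀ i : Fin n,
      Real.exp (y i.castSucc.castSucc) / Pd (n+1+1) y i.castSucc.castSucc *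
        (y (Fin.castSucc (Fin.last n)) - y (Fin.last (n+1)))
      = Real.exp ((y ∘ Fin.castSucc) i.castSucc) / Pd (n+1) (y ∘ Fin.castSucc) i.castSucc
        - Real.exp ((y ∘ (Fin.castSucc (Fin.last n)).succAbove) i.castSucc) /
            Pd (n+1) (y ∘ (Fin.castSucc (Fin.last n)).succAbove) i.castSucc := by
    intro i
    have e1 : Pd (n+1+1) y i.castSucc.castSucc
        = Pd (n+1) (y ∘ Fin.castSucc) i.castSucc * (y i.castSucc.castSucc - y (Fin.last (n+1))) :=
      Pd_castSucc (n+1) y i.castSucc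
    have e2 : Pd (n+1) (y ∘ Fin.castSucc) i.castSucc
        = Pd n (y ∘ Fin.castSucc ∘ Fin.castSucc) i *
            (y i.castSucc.castSucc - y (Fin.castSucc (Fin.last n))) :=
      Pd_castSucc n (y ∘ Fin.castSucc) i
    have ecomp : (y ∘ (Fin.castSucc (Fin.last n)).succAbove) ∘ Fin.castSucc
        = y ∘ Fin.castSucc ∘ Fin.castSucc := funext fun j => hb1 j
    have e3 : Pd (n+1) (y ∘ (Fin.castSucc (Fin.last n)).succAbove) i.castSucc
        = Pd n (y ∘ Fin.castSucc ∘ Fin.castSucc) i *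
            (y i.castSucc.castSucc - y (Fin.last (n+1))) := by
      rw [Pd_castSucc n _ i, ecomp, hb1 i, hb2]
    have hQ0 : Pd n (y ∘ Fin.castSucc ∘ Fin.castSucc) i ≠ 0 :=
      Pd_ne_zero (hy.comp ((Fin.castSucc_injective _).comp (Fin.castSucc_injective _))) i
    have h1 : y i.castSucc.castSucc - y (Fin.castSucc (Fin.last n)) ≠ 0 :=
      sub_ne_zero.2 fun e => (Fin.castSucc_lt_last i).ne
        (Fin.castSucc_injective _ (hy e))
    have h2 : y i.castSucc.castSucc - y (Fin.last (n+1)) ≠ 0 :=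
      sub_ne_zero.2 fun e => (Fin.castSucc_lt_last _).ne (hy e)
    have hb1' := hb1 i
    simp only [Function.comp_apply] at hb1' ⊢
    rw [e1, e2, e3, hb1']
    field_simp
    ring
  have hP : Real.exp (y (Fin.castSucc (Fin.last n))) / Pd (n+1+1) y (Fin.castSucc (Fin.last n)) *
        (y (Fin.castSucc (Fin.last n)) - y (Fin.last (n+1)))
      = Real.exp ((y ∘ Fin.castSucc) (Fin.last n)) / Pd (n+1) (y ∘ Fin.castSucc) (Fin.last n) := by
    have e1 : Pd (n+1+1) y (Fin.castSucc (Fin.last n))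
        = Pd (n+1) (y ∘ Fin.castSucc) (Fin.last n) *
            (y (Fin.castSucc (Fin.last n)) - y (Fin.last (n+1))) := Pd_castSucc (n+1) y (Fin.last n)
    have h0 : Pd (n+1) (y ∘ Fin.castSucc) (Fin.last n) ≠ 0 := Pd_ne_zero ha _
    simp only [Function.comp_apply]
    rw [e1]
    field_simp
  have hQ : Real.exp (y (Fin.last (n+1))) / Pd (n+1+1) y (Fin.last (n+1)) *
        (y (Fin.castSucc (Fin.last n)) - y (Fin.last (n+1)))
      = -(Real.exp ((y ∘ (Fin.castSucc (Fin.last n)).succAbove) (Fin.last n)) /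
          Pd (n+1) (y ∘ (Fin.castSucc (Fin.last n)).succAbove) (Fin.last n)) := by
    have e1 : Pd (n+1+1) y (Fin.last (n+1))
        = Pd (n+1) (y ∘ (Fin.castSucc (Fin.last n)).succAbove) (Fin.last n) *
            (y (Fin.last (n+1)) - y (Fin.castSucc (Fin.last n))) := by
      rw [Pd_last (n+1) y, Pd_last n _, Fin.prod_univ_castSucc]
      congr 1
      exact Finset.prod_congr rfl fun j _ => by rw [hb1 j, hb2]
    have h0 : Pd (n+1) (y ∘ (Fin.castSucc (Fin.last n)).succAbove) (Fin.last n) ≠ 0 :=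
      Pd_ne_zero hbinj _
    have hk' : y (Fin.last (n+1)) - y (Fin.castSucc (Fin.last n)) ≠ 0 :=
      sub_ne_zero.2 fun e => hpq (hy e.symm)
    rw [e1, hb2]
    field_simp
    ring
  rw [Finset.sum_congr rfl fun i _ => hterm i, Finset.sum_sub_distrib, hP, hQ]
  ring

def T (n : ℕ) : Set (ℝ × (Fin n → ℝ)) := {p | (∀ i, 0 ≤ p.2 i) ∧ 0 ≤ p.1 ∧ p.1 + ∑ i, p.2 i ≤ 1}

def g (n : ℕ) (y : Fin (n+2) → ℝ) : ℝ × (Fin n → ℝ) → ℝ := fun p =>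
  Real.exp ((∑ i : Fin n, y i.castSucc.castSucc * p.2 i) + y (Fin.castSucc (Fin.last n)) * p.1
    + y (Fin.last (n+1)) * (1 - ∑ i, p.2 i - p.1))

def Phi (n : ℕ) (y : Fin (n+2) → ℝ) : (Fin n → ℝ) → ℝ := fun x =>
  ∫ t in Set.Icc (0:ℝ) (1 - ∑ i, x i), g n y (t, x)

lemma isClosed_T (n : ℕ) : IsClosed (T n) := by
  have h1 : IsClosed {p : ℝ × (Fin n → ℝ) | ∀ i, 0 ≤ p.2 i} := by
    have : {p : ℝ × (Fin n → ℝ) | ∀ i, 0 ≤ p.2 i} = ⋂ i, {p | 0 ≤ p.2 i} := by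
      ext p; simp [Set.mem_iInter]
    rw [this]
    exact isClosed_iInter fun i =>
      isClosed_le continuous_const ((continuous_apply i).comp continuous_snd)
  have h2 : IsClosed {p : ℝ × (Fin n → ℝ) | 0 ≤ p.1} := isClosed_le continuous_const continuous_fst
  have h3 : IsClosed {p : ℝ × (Fin n → ℝ) | p.1 + ∑ i, p.2 i ≤ 1} :=
    isClosed_le (by fun_prop) continuous_const
  have : T n = {p : ℝ × (Fin n → ℝ) | ∀ i, 0 ≤ p.2 i} ∩
      ({p | 0 ≤ p.1} ∩ {p | p.1 + ∑ i, p.2 i ≤ 1}) := by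
    ext p; simp [T, Set.mem_setOf_eq, and_assoc]
  rw [this]; exact h1.inter (h2.inter h3)

lemma isCompact_T (n : ℕ) : IsCompact (T n) := by
  refine IsCompact.of_isClosed_subset (isCompact_Icc (a := ((0:ℝ), (0 : Fin n → ℝ)))
    (b := (1, 1))) (isClosed_T n) ?_
  rintro ⟨t, x⟩ ⟨h1, h2, h3⟩
  dsimp only at h1 h2 h3
  have hsum : (0:ℝ) ≤ ∑ i, x i := Finset.sum_nonneg fun i _ => h1 i
  refine Set.mem_Icc.2 ⟨Prod.mk_le_mk.2 ⟨h2, fun i => h1 i⟩,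
    Prod.mk_le_mk.2 ⟨by linarith, fun i => ?_⟩⟩
  have : x i ≤ ∑ j, x j := Finset.single_le_sum (fun j _ => h1 j) (Finset.mem_univ i)
  simp only [Pi.one_apply]
  linarith

lemma measurableSet_T (n : ℕ) : MeasurableSet (T n) := (isClosed_T n).measurableSet

lemma continuous_g (n : ℕ) (y : Fin (n+2) → ℝ) : Continuous (g n y) := by
  unfold g; fun_prop

lemma integrableOn_g (n : ℕ) (y : Fin (n+2) → ℝ) : IntegrableOn (g n y) (T n) :=
  (continuous_g n y).continuousOn.integrableOn_compact (isCompact_T n)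

lemma exp_int (k s : ℝ) (hk : k ≠ 0) :
    ∫ t in (0:ℝ)..s, Real.exp (k * t) = (Real.exp (k*s) - 1)/k := by
  rw [intervalIntegral.integral_comp_mul_left (fun u => Real.exp u) hk]
  rw [mul_zero, integral_exp, Real.exp_zero, smul_eq_mul]
  ring

lemma he (n : ℕ) (x : Fin (n+1) → ℝ) :
    (MeasurableEquiv.piFinSuccAbove (fun _ : Fin (n+1) => ℝ) (Fin.last n)) x
      = (x (Fin.last n), fun j => x j.castSucc) := by
  simp [MeasurableEquiv.piFinSuccAbove]
  rfl

lemma step (n : ℕ) (y : Fin (n+2) → ℝ)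
    (h : y (Fin.castSucc (Fin.last n)) ≠ y (Fin.last (n+1))) :
    LHS (n+1) y =
      (LHS n (y ∘ Fin.castSucc) - LHS n (y ∘ (Fin.castSucc (Fin.last n)).succAbove)) /
        (y (Fin.castSucc (Fin.last n)) - y (Fin.last (n+1))) := by
  have hk : y (Fin.castSucc (Fin.last n)) - y (Fin.last (n+1)) ≠ 0 := sub_ne_zero.2 h
  -- Step 1: transfer to the product space
  have hpre : S (n+1) =
      (MeasurableEquiv.piFinSuccAbove (fun _ : Fin (n+1) => ℝ) (Fin.last n)) ⁻¹' (T n) := by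
    ext x
    simp only [S, T, Set.mem_setOf_eq, Set.mem_preimage, he]
    constructor
    · rintro ⟨h1, h2⟩
      rw [Fin.sum_univ_castSucc] at h2
      exact ⟨fun i => h1 _, h1 _, by linarith⟩
    · rintro ⟨h1, h2, h3⟩
      refine ⟨fun i => Fin.lastCases h2 h1 i, ?_⟩
      rw [Fin.sum_univ_castSucc]; linarith
  have hfg : ∀ x : Fin (n+1) → ℝ, F (n+1) y x =
      g n y ((MeasurableEquiv.piFinSuccAbove (fun _ : Fin (n+1) => ℝ) (Fin.last n)) x) := by
    intro x
    rw [he]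
    unfold F g
    congr 1
    simp only [Fin.sum_univ_castSucc]
    ring
  have step1 : LHS (n+1) y = ∫ p in T n, g n y p := by
    unfold LHS
    rw [hpre]
    simp only [hfg]
    have := (measurePreserving_piFinSuccAbove (fun _ : Fin (n+1) => (volume : Measure ℝ))
      (Fin.last n)).setIntegral_preimage_emb
      (MeasurableEquiv.piFinSuccAbove (fun _ : Fin (n+1) => ℝ) (Fin.last n)).measurableEmbedding
      (g n y) (T n)
    rw [show (volume : Measure (Fin (n+1) → ℝ)) = Measure.pi fun _ => volume from volume_pi,
      this, show ((volume : Measure ℝ).prod (Measure.pi fun _ : Fin n => volume))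
        = (volume : Measure (ℝ × (Fin n → ℝ))) by rw [← volume_pi, ← Measure.volume_eq_prod _ _]]
  -- Step 2: Fubini
  have hint : Integrable ((T n).indicator (g n y)) ((volume : Measure ℝ).prod volume) := by
    rw [← Measure.volume_eq_prod]
    exact (integrable_indicator_iff (measurableSet_T n)).2 (integrableOn_g n y)
  have claim1 : ∀ x : Fin n → ℝ, (∫ t, (T n).indicator (g n y) (t, x)) =
      Set.indicator {x' : Fin n → ℝ | ∀ i, 0 ≤ x' i} (Phi n y) x := by
    intro x
    by_cases hx : ∀ i, 0 ≤ x i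
    · rw [Set.indicator_of_mem (show x ∈ {x' : Fin n → ℝ | ∀ i, 0 ≤ x' i} from hx)]
      have : (fun t => (T n).indicator (g n y) (t, x))
          = (Set.Icc 0 (1 - ∑ i, x i)).indicator (fun t => g n y (t, x)) := by
        funext t
        by_cases ht : t ∈ Set.Icc (0:ℝ) (1 - ∑ i, x i)
        · rw [Set.indicator_of_mem ht, Set.indicator_of_mem]
          exact ⟨hx, ht.1, by have := ht.2; linarith⟩
        · rw [Set.indicator_of_notMem ht, Set.indicator_of_notMem]
          intro hmem
          exact ht ⟨hmem.2.1, by have := hmem.2.2; linarith⟩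
      rw [this, integral_indicator measurableSet_Icc]
      rfl
    · rw [Set.indicator_of_notMem (show x ∉ {x' : Fin n → ℝ | ∀ i, 0 ≤ x' i} from hx)]
      have : (fun t => (T n).indicator (g n y) (t, x)) = fun _ => 0 := by
        funext t; exact Set.indicator_of_notMem (fun hmem => hx hmem.1) _
      rw [this, integral_zero]
  have claim2 : Set.indicator {x' : Fin n → ℝ | ∀ i, 0 ≤ x' i} (Phi n y)
      = Set.indicator (S n) (Phi n y) := by
    funext x
    by_cases hx : x ∈ S n
    · rw [Set.indicator_of_mem hx, Set.indicator_of_mem (show x ∈ {x' : Fin n → ℝ | ∀ i, 0 ≤ x' i} from hx.1)]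
    · rw [Set.indicator_of_notMem hx]
      by_cases hx' : ∀ i, 0 ≤ x i
      · rw [Set.indicator_of_mem (show x ∈ {x' : Fin n → ℝ | ∀ i, 0 ≤ x' i} from hx')]
        have hsum : ¬ (∑ i, x i ≤ 1) := fun hs => hx ⟨hx', hs⟩
        push_neg at hsum
        have hemp : Set.Icc (0:ℝ) (1 - ∑ i, x i) = ∅ := Set.Icc_eq_empty (by linarith)
        unfold Phi
        rw [hemp]
        simp
      · rw [Set.indicator_of_notMem (show x ∉ {x' : Fin n → ℝ | ∀ i, 0 ≤ x' i} from hx')]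
  have step2 : (∫ p in T n, g n y p) = ∫ x in S n, Phi n y x := by
    rw [← integral_indicator (measurableSet_T n)]
    rw [show (volume : Measure (ℝ × (Fin n → ℝ))) = (volume : Measure ℝ).prod volume from
      Measure.volume_eq_prod _ _]
    rw [integral_prod_symm _ hint]
    simp only [claim1]
    rw [claim2, integral_indicator (measurableSet_S n)]
  -- Step 3: evaluate the inner integral
  have step3 : ∀ x ∈ S n, Phi n y x =
      (F n (y ∘ Fin.castSucc) x - F n (y ∘ (Fin.castSucc (Fin.last n)).succAbove) x) /
        (y (Fin.castSucc (Fin.last n)) - y (Fin.last (n+1))) := by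
    intro x hx
    have hs0 : (0:ℝ) ≤ 1 - ∑ i, x i := by have := hx.2; linarith
    unfold Phi F
    rw [integral_Icc_eq_integral_Ioc, ← intervalIntegral.integral_of_le hs0]
    have hg : ∀ t : ℝ, g n y (t, x) =
        Real.exp ((y (Fin.castSucc (Fin.last n)) - y (Fin.last (n+1))) * t) *
          Real.exp ((∑ i : Fin n, y i.castSucc.castSucc * x i)
            + y (Fin.last (n+1)) * (1 - ∑ i, x i)) := by
      intro t; unfold g; rw [← Real.exp_add]; congr 1; ring
    simp only [hg]
    rw [intervalIntegral.integral_mul_const, exp_int _ _ hk]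
    have hb1 : ∀ i : Fin n, y ((Fin.castSucc (Fin.last n)).succAbove i.castSucc)
        = y i.castSucc.castSucc := fun i => by
      rw [Fin.succAbove_of_castSucc_lt _ _
        (Fin.castSucc_lt_castSucc_iff.2 (Fin.castSucc_lt_last i))]
    have hb2 : y ((Fin.castSucc (Fin.last n)).succAbove (Fin.last n)) = y (Fin.last (n+1)) := by
      rw [Fin.succAbove_of_le_castSucc _ _ (le_refl _), Fin.succ_last]
    simp only [Function.comp_apply, hb1, hb2]
    have key : Real.exp ((y (Fin.castSucc (Fin.last n)) - y (Fin.last (n+1))) * (1 - ∑ i, x i)) *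
        Real.exp ((∑ i : Fin n, y i.castSucc.castSucc * x i)
          + y (Fin.last (n+1)) * (1 - ∑ i, x i))
        = Real.exp ((∑ i : Fin n, y i.castSucc.castSucc * x i)
          + y (Fin.castSucc (Fin.last n)) * (1 - ∑ i, x i)) := by
      rw [← Real.exp_add]; congr 1; ring
    rw [div_mul_eq_mul_div, sub_mul, one_mul, key]
  rw [step1, step2, setIntegral_congr_fun (measurableSet_S n) step3, integral_div,
    integral_sub (integrableOn_F n _) (integrableOn_F n _)]
  rfl

lemma key : ∀ n (y : Fin (n+1) → ℝ), StrictMono y → LHS n y = RHS n y := by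
  intro n
  induction n with
  | zero => intro y _; exact base y
  | succ m ih =>
    intro y hy
    have hne : y (Fin.castSucc (Fin.last m)) ≠ y (Fin.last (m+1)) :=
      hy.injective.ne (by simp [Fin.ext_iff])
    rw [step m y hne, ih _ (hy.comp (Fin.strictMono_castSucc)),
      ih _ (hy.comp ((Fin.castSucc (Fin.last m)).strictMono_succAbove)),
      ← RHS_rec m y hy.injective]

end Stmt4

/-- For strictly increasing reals `y₁ < ⋯ < y_{n+1}` (`n ≥ 1`, i.e. at least two of
them), the integral of `exp ⟨y, x⟩` over the standard simplex (with
`x_{n+1} := 1 - ∑_{i ≤ n} x i`) equals `∑ᵢ e^{yᵢ} / ∏_{j ≠ i} (yᵢ - yⱼ)`. -/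
theorem stmt_4 (n : ℕ) (hn : 1 ≤ n) (y : Fin (n + 1) → ℝ) (hy : StrictMono y) :
    ∫ x in {x : Fin n → ℝ | (∀ i, 0 ≤ x i) ∧ ∑ i, x i ≤ 1},
        Real.exp ((∑ i : Fin n, y i.castSucc * x i) + y (Fin.last n) * (1 - ∑ i, x i)) =
      ∑ i, Real.exp (y i) / ∏ j ∈ Finset.univ.erase i, (y i - y j) := by
  exact Stmt4.key n y hy
end
end

section
/- For distinct real numbers y₁, …, yₙ, the n-fold convolution of the exponential functions t ↦ e^{yᵢ t} satisfies (e^{y₁ t} * ⋯ * e^{yₙ t})(t) = ∑_{i=1}^{n} e^{yᵢ t} / ∏_{j ≠ i} (yᵢ − yⱼ) for all t ≥ 0. -/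
/-
Write `E_s(t) = ∑_{x ∈ s} e^{xt} / ∏_{x' ∈ s, x' ≠ x} (x - x')` (`expDivDiff`) for the divided
difference of `x ↦ e^{xt}` on the nodes `s`. Convolving with `e^{at}` takes `E_s` to `E_{s ∪ {a}}`
for `a ∉ s`: since `∫₀ᵗ e^{au} e^{x(t-u)} du = (e^{at} - e^{xt}) / (a - x)`, this reduces to the
partial fraction decomposition `∑_{x ∈ s} w_x / (a - x) = 1 / ∏_{x ∈ s} (a - x)` for the nodal
weights `w_x = 1 / ∏_{x' ≠ x} (x - x')`, which is the first barycentric form of the Lagrange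
interpolant of the constant `1`.
-/

open MeasureTheory

/-- Iterated convolution (on `[0,∞)`, `(f * g) t = ∫₀ᵗ f s · g (t - s) ds`) of the
exponential functions `t ↦ exp (yᵢ t)` for a list `y₁, …, yₙ` of reals. -/
noncomputable def expConv : List ℝ → ℝ → ℝ
  | [], _ => 1
  | [y], t => Real.exp (y * t)
  | y :: ys, t => ∫ s in (0:ℝ)..t, Real.exp (y * s) * expConv ys (t - s)

open Finset Lagrange Polynomial

namespace Lagrange

variable {F ι : Type*} [Field F] [DecidableEq ι] {s : Finset ι} {v : ι → F}

theorem sum_nodalWeight_mul_inv_sub (hvs : Set.InjOn v s) (hs : s.Nonempty) {x : F}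
    (hx : ∀ i ∈ s, x ≠ v i) :
    ∑ i ∈ s, nodalWeight s v i * (x - v i)⁻¹ = (∏ i ∈ s, (x - v i))⁻¹ := by
  have h := eval_interpolate_not_at_node 1 hx
  simp only [interpolate_one hvs hs, eval_one, eval_nodal, Pi.one_apply, mul_one] at h
  exact eq_inv_of_mul_eq_one_right h.symm

theorem nodalWeight_insert_self {a : ι} (ha : a ∉ s) :
    nodalWeight (insert a s) v a = (∏ i ∈ s, (v a - v i))⁻¹ := by
  rw [nodalWeight, erase_insert ha, prod_inv_distrib]

theorem nodalWeight_insert_of_ne {a i : ι} (ha : a ∉ s) (hia : i ≠ a) :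
    nodalWeight (insert a s) v i = (v i - v a)⁻¹ * nodalWeight s v i := by
  rw [nodalWeight, erase_insert_of_ne hia.symm,
    prod_insert fun h => ha (mem_of_mem_erase h), nodalWeight]

theorem nodalWeight_image_id [DecidableEq F] (hv : Function.Injective v) (i : ι) :
    nodalWeight (s.image v) id (v i) = nodalWeight s v i := by
  rw [nodalWeight, ← image_erase hv, prod_image hv.injOn, nodalWeight]
  rfl

end Lagrange

open Real

noncomputable def expDivDiff (s : Finset ℝ) (t : ℝ) : ℝ :=
  ∑ x ∈ s, nodalWeight s id x * exp (x * t)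

theorem integral_exp_mul_mul_exp_mul_sub {a x : ℝ} (hax : a ≠ x) (t : ℝ) :
    ∫ u in (0 : ℝ)..t, exp (a * u) * exp (x * (t - u)) =
      (exp (a * t) - exp (x * t)) / (a - x) := by
  have hc : a - x ≠ 0 := sub_ne_zero.mpr hax
  have hmul : ∀ u, exp (a * u) * exp (x * (t - u)) = exp (x * t) * exp ((a - x) * u) := by
    intro u
    rw [← exp_add, ← exp_add]
    ring_nf
  simp_rw [hmul, intervalIntegral.integral_const_mul,
    intervalIntegral.integral_comp_mul_left (fun u => exp u) hc, integral_exp]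
  have hexp : exp (x * t) * exp ((a - x) * t) = exp (a * t) := by rw [← exp_add]; ring_nf
  rw [smul_eq_mul, mul_zero, exp_zero, ← hexp]
  ring

theorem integral_exp_mul_mul_expDivDiff {s : Finset ℝ} (hs : s.Nonempty) {a : ℝ} (ha : a ∉ s)
    (t : ℝ) :
    ∫ u in (0 : ℝ)..t, exp (a * u) * expDivDiff s (t - u) = expDivDiff (insert a s) t := by
  have hax : ∀ x ∈ s, a ≠ x := fun x hx h => ha (h ▸ hx)
  unfold expDivDiff
  simp_rw [mul_sum]
  rw [intervalIntegral.integral_finsetSum fun x _ => by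
    apply Continuous.intervalIntegrable; fun_prop]
  calc ∑ x ∈ s, ∫ u in (0 : ℝ)..t, exp (a * u) * (nodalWeight s id x * exp (x * (t - u)))
      = ∑ x ∈ s, nodalWeight s id x * ((exp (a * t) - exp (x * t)) / (a - x)) := by
        refine sum_congr rfl fun x hx => ?_
        simp_rw [mul_left_comm (exp _), intervalIntegral.integral_const_mul,
          integral_exp_mul_mul_exp_mul_sub (hax x hx)]
    _ = exp (a * t) * ∑ x ∈ s, nodalWeight s id x * (a - x)⁻¹
          + ∑ x ∈ s, (x - a)⁻¹ * nodalWeight s id x * exp (x * t) := by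
        rw [mul_sum, ← sum_add_distrib]
        refine sum_congr rfl fun x hx => ?_
        have hxa : x - a ≠ 0 := sub_ne_zero.mpr (hax x hx).symm
        have hax' : a - x ≠ 0 := sub_ne_zero.mpr (hax x hx)
        field_simp
        ring
    _ = ∑ x ∈ insert a s, nodalWeight (insert a s) id x * exp (x * t) := by
        have hpf := sum_nodalWeight_mul_inv_sub Function.injective_id.injOn hs hax
        have hwa : nodalWeight (insert a s) id a = (∏ x ∈ s, (a - x))⁻¹ :=
          nodalWeight_insert_self ha
        simp only [id] at hpf
        rw [hpf, sum_insert ha, hwa, mul_comm]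
        congr 1
        refine sum_congr rfl fun x hx => ?_
        rw [nodalWeight_insert_of_ne ha (hax x hx).symm]
        rfl

theorem expConv_eq_expDivDiff :
    ∀ {l : List ℝ}, l ≠ [] → l.Nodup → ∀ t, expConv l t = expDivDiff l.toFinset t
  | [a], _, _, t => by simp [expConv, expDivDiff, nodalWeight]
  | a :: b :: l, _, hnd, t => by
    obtain ⟨ha, hnd⟩ := List.nodup_cons.mp hnd
    have ih := expConv_eq_expDivDiff (List.cons_ne_nil b l) hnd
    rw [expConv.eq_3 t a (b :: l) (List.cons_ne_nil b l), List.toFinset_cons,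
      ← integral_exp_mul_mul_expDivDiff ⟨b, by simp⟩ (by simpa using ha)]
    simp_rw [ih]

theorem stmt_5_general (n : ℕ) (hn : 1 ≤ n) (y : Fin n → ℝ) (hy : Function.Injective y)
    (t : ℝ) :
    expConv (List.ofFn y) t =
      ∑ i, Real.exp (y i * t) / ∏ j ∈ Finset.univ.erase i, (y i - y j) := by
  have hofFn : (List.ofFn y).toFinset = univ.image y := by
    ext
    simp
  rw [expConv_eq_expDivDiff (List.ofFn_eq_nil_iff.not.mpr (by omega)) (List.nodup_ofFn.mpr hy),
    hofFn, expDivDiff, sum_image hy.injOn]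
  refine sum_congr rfl fun i _ => ?_
  rw [nodalWeight_image_id hy, nodalWeight, prod_inv_distrib, div_eq_inv_mul]

/-- For pairwise distinct reals `y₁, …, yₙ`, the `n`-fold convolution of the
exponentials satisfies `(e^{y₁ t} * ⋯ * e^{yₙ t})(t) = ∑ᵢ e^{yᵢ t} / ∏_{j ≠ i} (yᵢ - yⱼ)`
for all `t ≥ 0`. -/
theorem stmt_5 (n : ℕ) (hn : 1 ≤ n) (y : Fin n → ℝ) (hy : Function.Injective y)
    (t : ℝ) (ht : 0 ≤ t) :
    expConv (List.ofFn y) t =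
      ∑ i, Real.exp (y i * t) / ∏ j ∈ Finset.univ.erase i, (y i - y j) :=
  stmt_5_general n hn y hy t
end

section
/- Let μ be the uniform (normalized Lebesgue) probability measure on a d-dimensional convex body Ω contained in a ball of radius R. If α lies in the η-interior of Ω (the η-ball around α lies in Ω), then any minimizer y⋆ of F(y) = log ∫_Ω exp(⟨−y, x − α⟩) dμ(x) satisfies ‖y⋆‖ ≤ (2d/η) · log(4R/η). -/
open MeasureTheory

/-! Minimality of `y⋆` against `y = 0` gives `∫ exp ⟪-y⋆, x - α⟫ dμ ≤ 1`. The ball of radius `η/4`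
centred at `α - (3η/4) y⋆/‖y⋆‖` lies in `B_η(α) ⊆ Ω`, and on it the integrand is at least
`exp (η‖y⋆‖/2)`; its `μ`-measure is at least `(η/(4R))^d`, comparing its volume with that of the
ball of radius `R` containing `Ω`. Hence `η‖y⋆‖/2 ≤ d log (4R/η)`. -/

open Metric ProbabilityTheory Module Real

lemma measureReal_cond_of_subset {X : Type*} [MeasurableSpace X] {μ : Measure X} {s t : Set X}
    (ht : MeasurableSet t) (hts : t ⊆ s) : μ[|s].real t = μ.real t / μ.real s := by
  rw [measureReal_def, cond_apply' ht, Set.inter_eq_right.mpr hts, ENNReal.toReal_mul,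
    ENNReal.toReal_inv, inv_mul_eq_div, measureReal_def, measureReal_def]

lemma Continuous.integrable_cond_of_isBounded {X : Type*} [MetricSpace X] [ProperSpace X]
    [MeasurableSpace X] [OpensMeasurableSpace X] {μ : Measure X} [IsFiniteMeasureOnCompacts μ]
    {f : X → ℝ} (hf : Continuous f) {s : Set X} (hs : Bornology.IsBounded s) :
    Integrable f μ[|s] := by
  rcases eq_or_ne (μ s) 0 with hμs | hμs
  · simp [ProbabilityTheory.cond, Measure.restrict_eq_zero.mpr hμs]
  · exact ((hf.continuousOn.integrableOn_compact hs.isCompact_closure).mono_set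
      subset_closure).smul_measure (ENNReal.inv_ne_top.mpr hμs)

section InnerProductSpace

variable {E : Type*} [NormedAddCommGroup E] [InnerProductSpace ℝ E]

lemma ball_add_smul_inv_norm_smul_subset {v α : E} {s r : ℝ} (hs : 0 ≤ s) :
    ball (α + s • ‖v‖⁻¹ • v) r ⊆ ball α (s + r) := by
  refine ball_subset_ball' ?_
  have hunit : ‖‖v‖⁻¹ • v‖ ≤ 1 := by
    rcases eq_or_ne v 0 with rfl | hv
    · simp
    · exact (norm_smul_inv_norm hv).le
  rw [dist_eq_norm, add_sub_cancel_left, norm_smul, norm_of_nonneg hs]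
  linarith [mul_le_of_le_one_right hs hunit]

lemma le_inner_sub_of_mem_ball {v α x : E} {s r : ℝ}
    (hx : x ∈ ball (α + s • ‖v‖⁻¹ • v) r) :
    (s - r) * ‖v‖ ≤ inner ℝ v (x - α) := by
  set c := α + s • ‖v‖⁻¹ • v
  have hinner_dir : inner ℝ v (s • ‖v‖⁻¹ • v) = s * ‖v‖ := by
    rcases eq_or_ne v 0 with rfl | hv
    · simp
    · rw [real_inner_smul_right, real_inner_smul_right, real_inner_self_eq_norm_sq]
      field_simp
  have hcs : -(‖v‖ * ‖x - c‖) ≤ inner ℝ v (x - c) :=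
    neg_le_of_abs_le (abs_real_inner_le_norm v (x - c))
  have hxc : ‖v‖ * ‖x - c‖ ≤ ‖v‖ * r :=
    mul_le_mul_of_nonneg_left (mem_ball_iff_norm.mp hx).le (norm_nonneg v)
  have hsplit : x - α = (x - c) + s • ‖v‖⁻¹ • v := by
    simp only [c]; abel
  rw [hsplit, inner_add_right, hinner_dir]
  linarith

end InnerProductSpace

section AddHaar

variable {E : Type*} [NormedAddCommGroup E] [NormedSpace ℝ E] [MeasurableSpace E] [BorelSpace E]
  [FiniteDimensional ℝ E] (μ : Measure E) [μ.IsAddHaarMeasure] {Ω : Set E} {c : E} {r R : ℝ}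

lemma measureReal_cond_ball_pos (hr : 0 < r) (hcΩ : ball c r ⊆ Ω) (hΩR : Ω ⊆ closedBall 0 R) :
    0 < μ[|Ω].real (ball c r) := by
  have hball : 0 < μ (ball c r) := measure_ball_pos μ c hr
  have hΩ : μ Ω < ⊤ := (isBounded_closedBall.subset hΩR).measure_lt_top
  rw [measureReal_cond_of_subset measurableSet_ball hcΩ]
  exact div_pos (ENNReal.toReal_pos hball.ne' measure_ball_lt_top.ne)
    (ENNReal.toReal_pos (hball.trans_le (measure_mono hcΩ)).ne' hΩ.ne)

lemma inv_measureReal_cond_ball_le (hr : 0 < r) (hcΩ : ball c r ⊆ Ω)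
    (hΩR : Ω ⊆ closedBall 0 R) :
    (μ[|Ω].real (ball c r))⁻¹ ≤ (R / r) ^ finrank ℝ E := by
  have hR : 0 ≤ R := dist_nonneg.trans (mem_closedBall.mp (hΩR (hcΩ (mem_ball_self hr))))
  have hunit : 0 < μ.real (ball (0 : E) 1) :=
    ENNReal.toReal_pos (measure_ball_pos μ 0 one_pos).ne' measure_ball_lt_top.ne
  have hballr : μ.real (ball c r) = r ^ finrank ℝ E * μ.real (ball (0 : E) 1) := by
    rw [measureReal_def, Measure.addHaar_ball_of_pos μ c hr, ENNReal.toReal_mul,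
      ENNReal.toReal_ofReal (by positivity), measureReal_def]
  have hΩ : μ.real Ω ≤ R ^ finrank ℝ E * μ.real (ball (0 : E) 1) := by
    rw [← Measure.addHaar_real_closedBall μ 0 hR]
    exact measureReal_mono hΩR measure_closedBall_lt_top.ne
  calc (μ[|Ω].real (ball c r))⁻¹ = μ.real Ω / (r ^ finrank ℝ E * μ.real (ball (0 : E) 1)) := by
        rw [measureReal_cond_of_subset measurableSet_ball hcΩ, inv_div, hballr]
    _ ≤ R ^ finrank ℝ E * μ.real (ball (0 : E) 1) / (r ^ finrank ℝ E * μ.real (ball (0 : E) 1)) :=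
        div_le_div_of_nonneg_right hΩ (by positivity)
    _ = (R / r) ^ finrank ℝ E := by
        rw [mul_div_mul_right _ _ hunit.ne', div_pow]

end AddHaar

theorem mul_norm_le_finrank_mul_log_of_integral_exp_inner_cond_le_one {E : Type*}
    [NormedAddCommGroup E] [InnerProductSpace ℝ E] [MeasurableSpace E] [BorelSpace E]
    [FiniteDimensional ℝ E] (μ : Measure E) [μ.IsAddHaarMeasure] {Ω : Set E} {R η : ℝ} {α v : E} (hΩR : Ω ⊆ closedBall 0 R) (hη : 0 < η) (hball : ball α η ⊆ Ω)
    (hint : ∫ x, exp (inner ℝ v (x - α)) ∂μ[|Ω] ≤ 1) :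
    η * ‖v‖ / 2 ≤ finrank ℝ E * log (4 * R / η) := by
  set C := ball (α + (3 * η / 4) • ‖v‖⁻¹ • v) (η / 4)
  have hCΩ : C ⊆ Ω :=
    ((ball_add_smul_inv_norm_smul_subset (by positivity)).trans
      (ball_subset_ball (by linarith))).trans hball
  have hC : 0 < μ[|Ω].real C := measureReal_cond_ball_pos μ (by positivity) hCΩ hΩR
  have hfi : Integrable (fun x ↦ exp (inner ℝ v (x - α))) μ[|Ω] :=
    (by fun_prop : Continuous _).integrable_cond_of_isBounded (isBounded_closedBall.subset hΩR)
  have hlower : exp (η * ‖v‖ / 2) * μ[|Ω].real C ≤ 1 := by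
    refine le_trans ?_ hint
    refine (setIntegral_ge_of_const_le_real measurableSet_ball (measure_ne_top _ _) (fun x hx ↦ ?_)
      hfi.integrableOn).trans (setIntegral_le_integral hfi (ae_of_all _ fun _ ↦ (exp_pos _).le))
    have hx' := le_inner_sub_of_mem_ball hx
    exact exp_le_exp.2 (by linarith)
  calc η * ‖v‖ / 2 ≤ log (μ[|Ω].real C)⁻¹ := by
        rw [le_log_iff_exp_le (inv_pos.2 hC), ← one_div, le_div_iff₀ hC]
        exact hlower
    _ ≤ log ((R / (η / 4)) ^ finrank ℝ E) :=
        log_le_log (inv_pos.2 hC) (inv_measureReal_cond_ball_le μ (by positivity) hCΩ hΩR)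
    _ = finrank ℝ E * log (4 * R / η) := by
        rw [log_pow, div_div_eq_mul_div, mul_comm R]

theorem stmt_10_general (d : ℕ) (Ω : Set (EuclideanSpace ℝ (Fin d)))
    (R : ℝ) (hR : Ω ⊆ Metric.closedBall 0 R)
    (α : EuclideanSpace ℝ (Fin d)) (η : ℝ) (hη : 0 < η)
    (hball : Metric.ball α η ⊆ Ω)
    (ystar : EuclideanSpace ℝ (Fin d))
    (hmin : ∀ y : EuclideanSpace ℝ (Fin d),
      Real.log (∫ x, Real.exp (inner ℝ (-ystar) (x - α) : ℝ)
          ∂((volume Ω)⁻¹ • volume.restrict Ω)) ≤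
        Real.log (∫ x, Real.exp (inner ℝ (-y) (x - α) : ℝ)
          ∂((volume Ω)⁻¹ • volume.restrict Ω))) :
    ‖ystar‖ ≤ (2 * d / η) * Real.log (4 * R / η) := by
  change ∀ y, log (∫ x, exp (inner ℝ (-ystar) (x - α)) ∂volume[|Ω]) ≤
    log (∫ x, exp (inner ℝ (-y) (x - α)) ∂volume[|Ω]) at hmin
  have hΩ0 : volume Ω ≠ 0 := ((measure_ball_pos volume α hη).trans_le (measure_mono hball)).ne'
  have hΩtop : volume Ω ≠ ⊤ := (isBounded_closedBall.subset hR).measure_lt_top.ne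
  have := cond_isProbabilityMeasure_of_finite hΩ0 hΩtop
  have hlog : log (∫ x, exp (inner ℝ (-ystar) (x - α)) ∂volume[|Ω]) ≤ 0 := by
    simpa using hmin 0
  have hint := (log_nonpos_iff (integral_nonneg fun _ ↦ (exp_pos _).le)).mp hlog
  have key := mul_norm_le_finrank_mul_log_of_integral_exp_inner_cond_le_one volume hR hη hball hint
  rw [norm_neg, finrank_euclideanSpace_fin] at key
  rw [div_mul_eq_mul_div, le_div_iff₀ hη]
  linarith

/-- Bounding box for convex bodies: let `μ` be the uniform (normalized Lebesgue)
probability measure on a `d`-dimensional convex body `Ω` contained in a ball of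
radius `R`. If the `η`-ball around `α` lies in `Ω`, then any minimizer `y⋆` of
`y ↦ log ∫_Ω exp⟨−y, x−α⟩ dμ` satisfies `‖y⋆‖ ≤ (2d/η) log (4R/η)`. -/
theorem stmt_10 (d : ℕ) (Ω : Set (EuclideanSpace ℝ (Fin d)))
    (hcompact : IsCompact Ω) (hconv : Convex ℝ Ω) (hne : (interior Ω).Nonempty)
    (R : ℝ) (hR : Ω ⊆ Metric.closedBall 0 R)
    (α : EuclideanSpace ℝ (Fin d)) (η : ℝ) (hη : 0 < η)
    (hball : Metric.ball α η ⊆ Ω)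
    (ystar : EuclideanSpace ℝ (Fin d))
    (hmin : ∀ y : EuclideanSpace ℝ (Fin d),
      Real.log (∫ x, Real.exp (inner ℝ (-ystar) (x - α) : ℝ)
          ∂((volume Ω)⁻¹ • volume.restrict Ω)) ≤
        Real.log (∫ x, Real.exp (inner ℝ (-y) (x - α) : ℝ)
          ∂((volume Ω)⁻¹ • volume.restrict Ω))) :
    ‖ystar‖ ≤ (2 * d / η) * Real.log (4 * R / η) :=
  stmt_10_general d Ω R hR α η hη hball ystar hmin
end

section
/- Let Ω be a convex body in ℝ^d contained in a ball of radius R, and let α be in the η-interior of Ω. Then for every unit vector u in ℝ^d, the normalized-Lebesgue mass of the half-space {x ∈ Ω : ⟨x − α + (η/2)u, −u⟩ ≥ 0} is at least (η/(4R))^d. -/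
open MeasureTheory Measure Metric Module

/-!
The half-space contains the ball of radius `η/4` centred at `α - (3η/4) u`: this ball lies in
`B_η(α) ⊆ Ω` and is tangent from inside to the bounding hyperplane through `α - (η/2) u`.
Since `Ω` lies in a ball of radius `R`, comparing the two Haar volumes gives the ratio
`(η/4 / R)^d`.
-/

section Geometry

variable {E : Type*}

theorem pos_of_ball_subset_closedBall [NormedAddCommGroup E] [NormedSpace ℝ E] [Nontrivial E]
    {α x₀ : E} {η R : ℝ} (hη : 0 < η) (h : ball α η ⊆ closedBall x₀ R) : 0 < R := by
  by_contra! hR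
  have h_diam : diam (ball α η) ≤ diam (closedBall x₀ R) := diam_mono h isBounded_closedBall
  have h_point : closedBall x₀ R ⊆ {x₀} :=
    closedBall_zero (x := x₀) ▸ closedBall_subset_closedBall hR
  have h_zero : diam (closedBall x₀ R) ≤ 0 :=
    (diam_mono h_point Bornology.isBounded_singleton).trans_eq diam_singleton
  rw [diam_ball_eq α hη.le] at h_diam
  linarith

theorem ball_sub_smul_subset_setOf_inner_nonpos [NormedAddCommGroup E] [InnerProductSpace ℝ E]
    {u : E} (hu : ‖u‖ = 1) (p : E) (r : ℝ) :
    ball (p - r • u) r ⊆ {x | inner ℝ (x - p) u ≤ 0} := by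
  intro x hx
  rw [mem_ball, dist_eq_norm] at hx
  have h_split : x - p = (x - (p - r • u)) - r • u := by abel
  have h_cs : inner ℝ (x - (p - r • u)) u ≤ ‖x - (p - r • u)‖ := by
    simpa [hu] using real_inner_le_norm (x - (p - r • u)) u
  show inner ℝ (x - p) u ≤ 0
  rw [h_split, inner_sub_left, real_inner_smul_left,
    real_inner_self_eq_norm_sq, hu]
  linarith

theorem ofReal_div_pow_finrank_le_measure_div [NormedAddCommGroup E] [NormedSpace ℝ E]
    [FiniteDimensional ℝ E] [MeasurableSpace E] [BorelSpace E] (μ : Measure E)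
    [μ.IsAddHaarMeasure] {S Ω : Set E} {c x₀ : E} {r R : ℝ} (hr : 0 < r) (hR : 0 < R)
    (hS : ball c r ⊆ S) (hΩ : Ω ⊆ closedBall x₀ R) :
    ENNReal.ofReal ((r / R) ^ finrank ℝ E) ≤ μ S / μ Ω := by
  have hS_pos : μ S ≠ 0 := ((measure_ball_pos μ c hr).trans_le (measure_mono hS)).ne'
  have hΩ_fin : μ Ω ≠ ⊤ := (measure_mono hΩ |>.trans_lt measure_closedBall_lt_top).ne
  rw [ENNReal.le_div_iff_mul_le (Or.inr hS_pos) (Or.inl hΩ_fin)]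
  calc ENNReal.ofReal ((r / R) ^ finrank ℝ E) * μ Ω
      ≤ ENNReal.ofReal ((r / R) ^ finrank ℝ E) * μ (closedBall x₀ R) := by
        gcongr
    _ = μ (ball c r) := by
        rw [addHaar_closedBall μ x₀ hR.le, addHaar_ball_of_pos μ c hr, ← mul_assoc,
          ← ENNReal.ofReal_mul (by positivity), ← mul_pow, div_mul_cancel₀ r hR.ne']
    _ ≤ μ S := measure_mono hS

end Geometry

theorem stmt_11_general (d : ℕ) (Ω : Set (EuclideanSpace ℝ (Fin d)))
    (R η : ℝ) (hη : 0 < η) (hR : Ω ⊆ Metric.closedBall 0 R)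
    (α : EuclideanSpace ℝ (Fin d)) (hball : Metric.ball α η ⊆ Ω) :
    ∀ u : EuclideanSpace ℝ (Fin d), ‖u‖ = 1 →
      ENNReal.ofReal ((η / (4 * R)) ^ d) ≤
        volume {x ∈ Ω | 0 ≤ (inner ℝ (x - α + (η / 2) • u) (-u) : ℝ)} / volume Ω := by
  intro u hu
  have : Nontrivial (EuclideanSpace ℝ (Fin d)) :=
    nontrivial_of_ne u 0 (by simp [← norm_ne_zero_iff, hu])
  have hR₀ : 0 < R := pos_of_ball_subset_closedBall hη (hball.trans hR)
  set c := α - (η / 2) • u - (η / 4) • u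
  have hc_mem : ball c (η / 4) ⊆ ball α η := by
    refine ball_subset_ball' (le_of_eq ?_)
    rw [dist_eq_norm, show c - α = -((3 * η / 4) • u) by module, norm_neg, norm_smul, hu,
      Real.norm_of_nonneg (by positivity)]
    ring
  have h_sub : ball c (η / 4) ⊆ {x ∈ Ω | 0 ≤ (inner ℝ (x - α + (η / 2) • u) (-u) : ℝ)} := by
    intro x hx
    refine ⟨hball (hc_mem hx), ?_⟩
    have h_half := ball_sub_smul_subset_setOf_inner_nonpos hu (α - (η / 2) • u) (η / 4) hx
    rw [Set.mem_ofPred_eq, sub_sub_eq_add_sub] at h_half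
    rw [inner_neg_right, sub_add_eq_add_sub]
    linarith
  simpa [finrank_euclideanSpace_fin, div_div] using
    ofReal_div_pow_finrank_le_measure_div volume (by positivity) hR₀ h_sub hR

/-- For a convex body `Ω ⊆ ℝ^d` contained in a ball of radius `R` with
`B_η(α) ⊆ Ω`, every half-space whose boundary passes within `η/2` of `α`
contains at least an `(η/(4R))^d` fraction of the (Lebesgue) mass of `Ω`. -/
theorem stmt_11 (d : ℕ) (Ω : Set (EuclideanSpace ℝ (Fin d)))
    (hcompact : IsCompact Ω) (hconv : Convex ℝ Ω)
    (R η : ℝ) (hη : 0 < η) (hR : Ω ⊆ Metric.closedBall 0 R)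
    (α : EuclideanSpace ℝ (Fin d)) (hball : Metric.ball α η ⊆ Ω) :
    ∀ u : EuclideanSpace ℝ (Fin d), ‖u‖ = 1 →
      ENNReal.ofReal ((η / (4 * R)) ^ d) ≤
        volume {x ∈ Ω | 0 ≤ (inner ℝ (x - α + (η / 2) • u) (-u) : ℝ)} / volume Ω :=
  stmt_11_general d Ω R η hη hR α hball
end

section
/- (Schur–Horn corollary for linear optimization) For real diagonal n × n matrices D and D′, the infimum of ⟨U D U*, D′⟩ over all unitary matrices U equals the infimum of ⟨σ D σᵀ, D′⟩ over all permutation matrices σ; equivalently, min over unitaries of trace(U D U* D′) is achieved at a permutation of the diagonal of D. -/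
open Matrix Finset

section Aux

variable {n : ℕ}

private lemma trace_re_eq (D D' : Fin n → ℝ) (U : Matrix (Fin n) (Fin n) ℂ) :
    (Matrix.trace (U * Matrix.diagonal (fun i => (D i : ℂ)) * star U *
        star (Matrix.diagonal fun i => (D' i : ℂ)))).re
    = ∑ i, ∑ j, Complex.normSq (U i j) * (D j * D' i) := by
  have hd : star (Matrix.diagonal fun i => (D' i : ℂ)) =
      Matrix.diagonal fun i => (D' i : ℂ) := by
    rw [Matrix.star_eq_conjTranspose, Matrix.diagonal_conjTranspose]
    funext i
    simp [Pi.star_def, Complex.conj_ofReal]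
  rw [hd, Matrix.trace]
  simp only [Matrix.diag_apply, Matrix.mul_apply, Matrix.star_apply, Matrix.diagonal_apply,
    mul_ite, ite_mul, mul_zero, zero_mul, Finset.sum_ite_eq, Finset.sum_ite_eq',
    Finset.mem_univ, if_true]
  rw [Complex.re_sum]
  refine Finset.sum_congr rfl fun i _ => ?_
  rw [Finset.sum_mul, Complex.re_sum]
  refine Finset.sum_congr rfl fun j _ => ?_
  have : U i j * (D j : ℂ) * star (U i j) * (D' i : ℂ)
      = ((Complex.normSq (U i j) * (D j * D' i) : ℝ) : ℂ) := by
    push_cast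
    rw [← Complex.mul_conj]
    simp only [Complex.star_def]
    ring
  rw [this, Complex.ofReal_re]

private lemma normSq_mem_DS {U : Matrix (Fin n) (Fin n) ℂ}
    (hU : U ∈ Matrix.unitaryGroup (Fin n) ℂ) :
    Matrix.of (fun i j => Complex.normSq (U i j)) ∈ doublyStochastic ℝ (Fin n) := by
  rw [mem_doublyStochastic_iff_sum]
  refine ⟨fun i j => Complex.normSq_nonneg _, fun i => ?_, fun j => ?_⟩
  · have h := Matrix.mem_unitaryGroup_iff.mp hU
    have h2 := congrArg (fun M => (M i i).re) h
    simp only [Matrix.mul_apply, Matrix.star_apply, Matrix.one_apply_eq,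
      Complex.one_re] at h2
    rw [Complex.re_sum] at h2
    rw [← h2]
    refine Finset.sum_congr rfl fun j _ => ?_
    rw [Complex.star_def, Complex.mul_conj, Complex.ofReal_re]
    simp [Matrix.of_apply]
  · have h := Matrix.mem_unitaryGroup_iff'.mp hU
    have h2 := congrArg (fun M => (M j j).re) h
    simp only [Matrix.mul_apply, Matrix.star_apply, Matrix.one_apply_eq,
      Complex.one_re] at h2
    rw [Complex.re_sum] at h2
    rw [← h2]
    refine Finset.sum_congr rfl fun i _ => ?_
    rw [Complex.star_def, mul_comm, Complex.mul_conj, Complex.ofReal_re]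
    simp [Matrix.of_apply]

private lemma perm_mem_unitary (σ : Equiv.Perm (Fin n)) :
    σ.permMatrix ℂ ∈ Matrix.unitaryGroup (Fin n) ℂ := by
  rw [Matrix.mem_unitaryGroup_iff]
  ext i k
  simp only [Matrix.mul_apply, Matrix.star_apply, Equiv.Perm.permMatrix,
    PEquiv.toMatrix_apply, Equiv.toPEquiv_apply, Option.mem_def, Option.some.injEq,
    Matrix.one_apply]
  simp [apply_ite (star : ℂ → ℂ), Finset.sum_ite_eq, eq_comm (a := i) (b := k)]

private lemma permMatrix_normSq (σ : Equiv.Perm (Fin n)) (i j : Fin n) :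
    Complex.normSq (σ.permMatrix ℂ i j) = if σ i = j then 1 else 0 := by
  simp only [Equiv.Perm.permMatrix, PEquiv.toMatrix_apply, Equiv.toPEquiv_apply,
    Option.mem_def, Option.some.injEq, apply_ite Complex.normSq]
  simp

private lemma ds_bound (D D' : Fin n → ℝ) {S : Matrix (Fin n) (Fin n) ℝ}
    (hS : S ∈ doublyStochastic ℝ (Fin n)) :
    (⨅ σ : Equiv.Perm (Fin n), ∑ i, D (σ i) * D' i)
      ≤ ∑ i, ∑ j, S i j * (D j * D' i) := by
  set c : ℝ := ⨅ σ : Equiv.Perm (Fin n), ∑ i, D (σ i) * D' i with hc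
  have hlin : IsLinearMap ℝ (fun M : Matrix (Fin n) (Fin n) ℝ =>
      ∑ i, ∑ j, M i j * (D j * D' i)) := by
    constructor
    · intro x y
      simp [Matrix.add_apply, add_mul, Finset.sum_add_distrib]
    · intro a x
      simp [Matrix.smul_apply, smul_eq_mul, mul_assoc, Finset.mul_sum]
  have hconv : Convex ℝ {M : Matrix (Fin n) (Fin n) ℝ |
      c ≤ ∑ i, ∑ j, M i j * (D j * D' i)} := convex_halfSpace_ge hlin c
  have hsub : {M | ∃ σ : Equiv.Perm (Fin n), σ.permMatrix ℝ = M} ⊆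
      {M : Matrix (Fin n) (Fin n) ℝ | c ≤ ∑ i, ∑ j, M i j * (D j * D' i)} := by
    rintro M ⟨σ, rfl⟩
    have hval : ∑ i, ∑ j, σ.permMatrix ℝ i j * (D j * D' i) = ∑ i, D (σ i) * D' i := by
      refine Finset.sum_congr rfl fun i _ => ?_
      simp [Equiv.Perm.permMatrix, PEquiv.toMatrix_apply, Equiv.toPEquiv_apply,
        ite_mul, Finset.sum_ite_eq]
    simp only [Set.mem_setOf_eq]
    rw [hval]
    exact ciInf_le (Set.Finite.bddBelow (Set.finite_range _)) σ
  have := convexHull_min hsub hconv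
  rw [← doublyStochastic_eq_convexHull_permMatrix] at this
  exact this hS

end Aux

/-- Schur–Horn corollary: for real diagonal matrices `D`, `D'`, the infimum of
the Frobenius inner product `⟨U D U*, D'⟩ = Re tr (U D U* (D')*)` over unitary
`U` equals the infimum over permutation matrices `σ` of `⟨σ D σᵀ, D'⟩`. -/
theorem stmt_12 (n : ℕ) (D D' : Fin n → ℝ) :
    (⨅ U : Matrix.unitaryGroup (Fin n) ℂ,
      (Matrix.trace ((U : Matrix (Fin n) (Fin n) ℂ) *
          Matrix.diagonal (fun i => (D i : ℂ)) * star (U : Matrix (Fin n) (Fin n) ℂ) *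
          star (Matrix.diagonal fun i => (D' i : ℂ)))).re)
    = ⨅ σ : Equiv.Perm (Fin n), ∑ i, D (σ i) * D' i := by
  classical
  set f : Matrix.unitaryGroup (Fin n) ℂ → ℝ := fun U =>
    (Matrix.trace ((U : Matrix (Fin n) (Fin n) ℂ) *
        Matrix.diagonal (fun i => (D i : ℂ)) * star (U : Matrix (Fin n) (Fin n) ℂ) *
        star (Matrix.diagonal fun i => (D' i : ℂ)))).re with hf
  set c : ℝ := ⨅ σ : Equiv.Perm (Fin n), ∑ i, D (σ i) * D' i with hc
  have hkey : ∀ U : Matrix.unitaryGroup (Fin n) ℂ, c ≤ f U := by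
    intro U
    rw [hf]
    simp only
    rw [trace_re_eq D D' (U : Matrix (Fin n) (Fin n) ℂ)]
    exact ds_bound D D' (normSq_mem_DS U.2)
  have hbdd : BddBelow (Set.range f) := ⟨c, by rintro x ⟨U, rfl⟩; exact hkey U⟩
  refine le_antisymm (le_ciInf fun σ => ?_) (le_ciInf hkey)
  have h1 : (⨅ U, f U) ≤ f ⟨σ.permMatrix ℂ, perm_mem_unitary σ⟩ := ciInf_le hbdd _
  refine h1.trans_eq ?_
  rw [hf]
  simp only
  rw [trace_re_eq D D' (σ.permMatrix ℂ)]
  refine Finset.sum_congr rfl fun i _ => ?_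
  simp [Equiv.Perm.permMatrix, PEquiv.toMatrix_apply, Equiv.toPEquiv_apply,
    apply_ite Complex.normSq, ite_mul, Finset.sum_ite_eq]
end

section
/- Let μ be a probability measure on Ω, a subset of a finite-dimensional real inner product space, let A be a point, and define F_A(Y) = ⟨Y, A⟩ + log ∫_Ω exp(−⟨Y, X⟩) dμ(X). If Y⋆ minimizes F_A and Y° satisfies F_A(Y°) ≤ F_A(Y⋆) + ε, then the KL divergence from the Gibbs measure μ⋆ ∝ exp(−⟨Y⋆, X⟩) dμ to μ° ∝ exp(−⟨Y°, X⟩) dμ satisfies D_KL(μ⋆ ‖ μ°) = F_A(Y°) − F_A(Y⋆) ≤ ε. -/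
/-!
Dividing the two Gibbs densities gives `log (dμ⋆/dμ°) = ⟨Y° − Y⋆, X⟩ + log Z(Y°) − log Z(Y⋆)`,
an affine function of `X`. Its `μ⋆`-expectation therefore only involves the mean of `μ⋆`, which is
`A` by first-order optimality of `Y⋆`; the result is exactly `F_A(Y°) − F_A(Y⋆)`.
-/

open MeasureTheory Real
open scoped RealInnerProductSpace

namespace GibbsMeasure

variable {E : Type*} [NormedAddCommGroup E] [InnerProductSpace ℝ E]

lemma abs_le_exp_add_exp_neg (t : ℝ) : |t| ≤ exp t + exp (-t) :=
  calc |t| ≤ |t| + 1 := by linarith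
    _ ≤ exp |t| := add_one_le_exp _
    _ ≤ exp t + exp (-t) := exp_abs_le t

lemma integrable_of_forall_integrable_inner {α : Type*} [MeasurableSpace α] {μ : Measure α}
    [FiniteDimensional ℝ E] {f : α → E} (hf : ∀ w : E, Integrable (fun x => ⟪w, f x⟫) μ) :
    Integrable f μ := by
  let b := stdOrthonormalBasis ℝ E
  have hsum : f = fun x => ∑ i, ⟪b i, f x⟫ • b i := funext fun x => (b.sum_repr' (f x)).symm
  rw [hsum]
  exact integrable_finsetSum _ fun i _ => (hf (b i)).smul_const (b i)

variable [MeasurableSpace E] {μ : Measure E}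

noncomputable def partitionFn (μ : Measure E) (Y : E) : ℝ := ∫ X, exp (-⟪Y, X⟫) ∂μ

/-- The density `dμ_Y/dμ` of the Gibbs measure `μ_Y ∝ exp(−⟨Y, X⟩) dμ`. -/
noncomputable def gibbsDensity (μ : Measure E) (Y X : E) : ℝ := exp (-⟪Y, X⟫) / partitionFn μ Y

lemma partitionFn_pos [NeZero μ] {Y : E} (hY : Integrable (fun X => exp (-⟪Y, X⟫)) μ) :
    0 < partitionFn μ Y :=
  integral_exp_pos hY

lemma log_gibbsDensity_div {Y₁ Y₂ : E} (h₁ : 0 < partitionFn μ Y₁) (h₂ : 0 < partitionFn μ Y₂)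
    (X : E) :
    log (gibbsDensity μ Y₁ X / gibbsDensity μ Y₂ X) =
      ⟪Y₂ - Y₁, X⟫ + (log (partitionFn μ Y₂) - log (partitionFn μ Y₁)) := by
  rw [gibbsDensity, gibbsDensity, log_div (by positivity) (by positivity),
    log_div (by positivity) h₁.ne', log_div (by positivity) h₂.ne', log_exp, log_exp,
    inner_sub_left]
  ring

variable [BorelSpace E]

lemma integrable_exp_neg_inner_mul_inner {Y w : E}
    (hsub : Integrable (fun X => exp (-⟪Y - w, X⟫)) μ)
    (hadd : Integrable (fun X => exp (-⟪Y + w, X⟫)) μ) :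
    Integrable (fun X => exp (-⟪Y, X⟫) * ⟪w, X⟫) μ := by
  refine (hsub.add hadd).mono' (by fun_prop) (Filter.Eventually.of_forall fun X => ?_)
  have hsplit : exp (-⟪Y - w, X⟫) + exp (-⟪Y + w, X⟫) =
      exp (-⟪Y, X⟫) * (exp ⟪w, X⟫ + exp (-⟪w, X⟫)) := by
    rw [inner_sub_left, inner_add_left, mul_add, ← exp_add, ← exp_add]
    ring_nf
  rw [Pi.add_apply, hsplit, norm_mul, norm_of_nonneg (exp_pos _).le, Real.norm_eq_abs]
  exact mul_le_mul_of_nonneg_left (abs_le_exp_add_exp_neg _) (exp_pos _).le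

lemma integrable_exp_neg_inner_smul [FiniteDimensional ℝ E]
    (hZ : ∀ Y : E, Integrable (fun X => exp (-⟪Y, X⟫)) μ) (Y : E) :
    Integrable (fun X => exp (-⟪Y, X⟫) • X) μ :=
  integrable_of_forall_integrable_inner fun w => by
    simpa only [real_inner_smul_right] using
      integrable_exp_neg_inner_mul_inner (hZ (Y - w)) (hZ (Y + w))

lemma integral_gibbsDensity_mul_log_div [NeZero μ]
    (hZ : ∀ Y : E, Integrable (fun X => exp (-⟪Y, X⟫)) μ) (Y₁ Y₂ : E) :
    ∫ X, gibbsDensity μ Y₁ X * log (gibbsDensity μ Y₁ X / gibbsDensity μ Y₂ X) ∂μ =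
      (∫ X, exp (-⟪Y₁, X⟫) * ⟪Y₂ - Y₁, X⟫ ∂μ) / partitionFn μ Y₁ +
        (log (partitionFn μ Y₂) - log (partitionFn μ Y₁)) := by
  have h₁ := partitionFn_pos (hZ Y₁)
  have hint := integrable_exp_neg_inner_mul_inner (w := Y₂ - Y₁)
    (hZ (Y₁ - (Y₂ - Y₁))) (hZ (Y₁ + (Y₂ - Y₁)))
  simp_rw [log_gibbsDensity_div h₁ (partitionFn_pos (hZ Y₂)), gibbsDensity, div_mul_eq_mul_div,
    mul_add, add_div]
  rw [integral_add (hint.div_const _) (((hZ Y₁).mul_const _).div_const _), integral_div,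
    integral_div, integral_mul_const, ← partitionFn, mul_div_cancel_left₀ _ h₁.ne']

lemma integral_exp_neg_inner_mul_inner_of_mean [FiniteDimensional ℝ E]
    (hZ : ∀ Y : E, Integrable (fun X => exp (-⟪Y, X⟫)) μ) {Y A : E}
    (hmean : ∫ X, exp (-⟪Y, X⟫) • X ∂μ = partitionFn μ Y • A) (v : E) :
    ∫ X, exp (-⟪Y, X⟫) * ⟪v, X⟫ ∂μ = partitionFn μ Y * ⟪v, A⟫ := by
  rw [← real_inner_smul_right, ← hmean, ← integral_inner (integrable_exp_neg_inner_smul hZ Y)]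
  simp only [real_inner_smul_right]

theorem integral_gibbsDensity_mul_log_div_of_mean [NeZero μ] [FiniteDimensional ℝ E]
    (hZ : ∀ Y : E, Integrable (fun X => exp (-⟪Y, X⟫)) μ) {Y₁ A : E}
    (hmean : ∫ X, exp (-⟪Y₁, X⟫) • X ∂μ = partitionFn μ Y₁ • A) (Y₂ : E) :
    ∫ X, gibbsDensity μ Y₁ X * log (gibbsDensity μ Y₁ X / gibbsDensity μ Y₂ X) ∂μ =
      (⟪Y₂, A⟫ + log (partitionFn μ Y₂)) - (⟪Y₁, A⟫ + log (partitionFn μ Y₁)) := by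
  rw [integral_gibbsDensity_mul_log_div hZ, integral_exp_neg_inner_mul_inner_of_mean hZ hmean,
    mul_div_cancel_left₀ _ (partitionFn_pos (hZ Y₁)).ne', inner_sub_left]
  ring

end GibbsMeasure

theorem stmt_13_general {E : Type*} [NormedAddCommGroup E] [InnerProductSpace ℝ E]
    [FiniteDimensional ℝ E] [MeasurableSpace E] [BorelSpace E]
    (μ : Measure E) [IsProbabilityMeasure μ] (A : E) (ε : ℝ)
    (hZ : ∀ Y : E, Integrable (fun X => Real.exp (-(inner ℝ Y X : ℝ))) μ)
    (Ystar Ycirc : E)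
    (F : E → ℝ)
    (hF : ∀ Y : E, F Y = (inner ℝ Y A : ℝ) +
      Real.log (∫ X, Real.exp (-(inner ℝ Y X : ℝ)) ∂μ))
    (hmean : (∫ X, Real.exp (-(inner ℝ Ystar X : ℝ)) • X ∂μ) =
      (∫ X, Real.exp (-(inner ℝ Ystar X : ℝ)) ∂μ) • A)
    (hε : F Ycirc ≤ F Ystar + ε) :
    (∫ X, (Real.exp (-(inner ℝ Ystar X : ℝ)) / ∫ X', Real.exp (-(inner ℝ Ystar X' : ℝ)) ∂μ) *
        Real.log ((Real.exp (-(inner ℝ Ystar X : ℝ)) / ∫ X', Real.exp (-(inner ℝ Ystar X' : ℝ)) ∂μ) /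
          (Real.exp (-(inner ℝ Ycirc X : ℝ)) / ∫ X', Real.exp (-(inner ℝ Ycirc X' : ℝ)) ∂μ)) ∂μ)
      = F Ycirc - F Ystar ∧
    (∫ X, (Real.exp (-(inner ℝ Ystar X : ℝ)) / ∫ X', Real.exp (-(inner ℝ Ystar X' : ℝ)) ∂μ) *
        Real.log ((Real.exp (-(inner ℝ Ystar X : ℝ)) / ∫ X', Real.exp (-(inner ℝ Ystar X' : ℝ)) ∂μ) /
          (Real.exp (-(inner ℝ Ycirc X : ℝ)) / ∫ X', Real.exp (-(inner ℝ Ycirc X' : ℝ)) ∂μ)) ∂μ)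
      ≤ ε := by
  have hKL := GibbsMeasure.integral_gibbsDensity_mul_log_div_of_mean hZ hmean Ycirc
  simp only [GibbsMeasure.gibbsDensity, GibbsMeasure.partitionFn, ← hF] at hKL
  exact ⟨hKL, by linarith⟩

/-- KL-closeness of approximate dual optima: with
`F_A(Y) = ⟨Y, A⟩ + log ∫ exp(−⟨Y, X⟩) dμ`, if `Y⋆` is a global minimizer of `F_A`
(so the mean of the Gibbs measure `μ⋆ ∝ e^{−⟨Y⋆,X⟩} dμ` is `A`) and
`F_A(Y°) ≤ F_A(Y⋆) + ε`, then
`D_KL(μ⋆‖μ°) = F_A(Y°) − F_A(Y⋆) ≤ ε`. -/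
theorem stmt_13 {E : Type*} [NormedAddCommGroup E] [InnerProductSpace ℝ E]
    [FiniteDimensional ℝ E] [MeasurableSpace E] [BorelSpace E]
    (μ : Measure E) [IsProbabilityMeasure μ] (A : E) (ε : ℝ)
    (hZ : ∀ Y : E, Integrable (fun X => Real.exp (-(inner ℝ Y X : ℝ))) μ)
    (Ystar Ycirc : E)
    (F : E → ℝ)
    (hF : ∀ Y : E, F Y = (inner ℝ Y A : ℝ) +
      Real.log (∫ X, Real.exp (-(inner ℝ Y X : ℝ)) ∂μ))
    (hmin : ∀ Y : E, F Ystar ≤ F Y)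
    (hmean : (∫ X, Real.exp (-(inner ℝ Ystar X : ℝ)) • X ∂μ) =
      (∫ X, Real.exp (-(inner ℝ Ystar X : ℝ)) ∂μ) • A)
    (hε : F Ycirc ≤ F Ystar + ε) :
    (∫ X, (Real.exp (-(inner ℝ Ystar X : ℝ)) / ∫ X', Real.exp (-(inner ℝ Ystar X' : ℝ)) ∂μ) *
        Real.log ((Real.exp (-(inner ℝ Ystar X : ℝ)) / ∫ X', Real.exp (-(inner ℝ Ystar X' : ℝ)) ∂μ) /
          (Real.exp (-(inner ℝ Ycirc X : ℝ)) / ∫ X', Real.exp (-(inner ℝ Ycirc X' : ℝ)) ∂μ)) ∂μ)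
      = F Ycirc - F Ystar ∧
    (∫ X, (Real.exp (-(inner ℝ Ystar X : ℝ)) / ∫ X', Real.exp (-(inner ℝ Ystar X' : ℝ)) ∂μ) *
        Real.log ((Real.exp (-(inner ℝ Ystar X : ℝ)) / ∫ X', Real.exp (-(inner ℝ Ystar X' : ℝ)) ∂μ) /
          (Real.exp (-(inner ℝ Ycirc X : ℝ)) / ∫ X', Real.exp (-(inner ℝ Ycirc X' : ℝ)) ∂μ)) ∂μ)
      ≤ ε :=
  stmt_13_general μ A ε hZ Ystar Ycirc F hF hmean hε
end
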